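/- arXiv:1208.0346 — 2 statements merged into one kernel-verified Lean document; each statement's English description precedes it below -/
import Mathlib

section
/- If φ and ψ are commuting derivations of an associative algebra A over a field of characteristic zero, then the formula a * b = m(exp(ℏ φ⊗ψ)(a⊗b)) = Σ_{n≥0} (ℏⁿ/n!) φⁿ(a)·ψⁿ(b) defines an associative multiplication on A[[ℏ]]. -/
/-! The Moyal product is the deformation `f ⋆ g = Σ ℏ^m B_m(f, g)` with
`B_m(a, b) = φ^m a · ψ^m b / m!`, and such a deformation is associative as soon as
`Σ_{m+l=N} B_m(B_l(a, b), c) = Σ_{m+l=N} B_m(a, B_l(b, c))` for all `N` and all `a, b, c ∈ A`.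
Expanding the outer `φ^m` (resp. `ψ^m`) by the Leibniz rule
`φ^m(xy)/m! = Σ_{i+j=m} φ^i x · φ^j y/(i! j!)` and moving `ψ` past `φ`, both sides become
`Σ_{x+y+z=N} φ^(x+y) a · ψ^x φ^z b · ψ^(y+z) c/(x! y! z!)`. -/

open PowerSeries in
/-- The Groenewold–Moyal star product on `A[[ℏ]]` determined by commuting derivations
`φ, ψ`: the coefficient of `ℏ^n` in `f * g` is
`Σ_{m+i+j=n} (1/m!) φ^m(f_i) · ψ^m(g_j)`. -/
noncomputable def moyalStar {k A : Type*} [Field k] [CharZero k] [Ring A] [Algebra k A]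
    (φ ψ : A →ₗ[k] A) (f g : PowerSeries A) : PowerSeries A :=
  PowerSeries.mk fun n =>
    ∑ p ∈ Finset.HasAntidiagonal.antidiagonal n, ∑ q ∈ Finset.HasAntidiagonal.antidiagonal p.2,
      (p.1.factorial : k)⁻¹ •
        ((φ ^ p.1) (PowerSeries.coeff q.1 f) * (ψ ^ p.1) (PowerSeries.coeff q.2 g))

open Finset

theorem Finset.sum_antidiagonal_sum_antidiagonal_fst {S M : Type*} [AddMonoid S]
    [HasAntidiagonal S] [AddCommMonoid M] (f : S → S → S → M) (n : S) :
    ∑ p ∈ antidiagonal n, ∑ q ∈ antidiagonal p.1, f q.1 q.2 p.2 =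
      ∑ p ∈ antidiagonal n, ∑ q ∈ antidiagonal p.2, f p.1 q.1 q.2 := by
  simp only [sum_sigma']
  apply sum_nbij' (fun x ↦ ⟨(x.2.1, x.2.2 + x.1.2), (x.2.2, x.1.2)⟩)
    (fun x ↦ ⟨(x.1.1 + x.2.1, x.2.2), (x.1.1, x.2.1)⟩) <;> aesop (add simp [add_assoc])

theorem Module.End.pow_apply_mul_of_leibniz {R A : Type*} [Semiring R]
    [NonUnitalNonAssocSemiring A] [Module R A] (φ : Module.End R A)
    (hφ : ∀ a b : A, φ (a * b) = φ a * b + a * φ b) (n : ℕ) (a b : A) :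
    (φ ^ n) (a * b) = ∑ ij ∈ antidiagonal n, n.choose ij.1 • ((φ ^ ij.1) a * (φ ^ ij.2) b) := by
  induction n with
  | zero => simp
  | succ n ih =>
    rw [sum_antidiagonal_choose_succ_nsmul (fun i j ↦ (φ ^ i) a * (φ ^ j) b) n]
    simp only [pow_succ', Module.End.mul_apply, ih, map_sum, map_nsmul, hφ, nsmul_add,
      sum_add_distrib]
    rw [add_comm]
    congr 1
    refine sum_congr rfl fun ij hij ↦ ?_
    rw [Nat.choose_symm_of_eq_add (HasAntidiagonal.mem_antidiagonal.1 hij).symm]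

theorem Module.End.inv_factorial_smul_pow_apply_mul_of_leibniz {k A : Type*} [Field k]
    [CharZero k] [NonUnitalNonAssocSemiring A] [Module k A] (φ : Module.End k A)
    (hφ : ∀ a b : A, φ (a * b) = φ a * b + a * φ b) (n : ℕ) (a b : A) :
    (n.factorial : k)⁻¹ • (φ ^ n) (a * b) =
      ∑ ij ∈ antidiagonal n,
        ((ij.1.factorial : k)⁻¹ * (ij.2.factorial : k)⁻¹) • ((φ ^ ij.1) a * (φ ^ ij.2) b) := by
  rw [φ.pow_apply_mul_of_leibniz hφ, smul_sum]
  refine sum_congr rfl fun ij hij ↦ ?_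
  obtain rfl := HasAntidiagonal.mem_antidiagonal.1 hij
  rw [← Nat.cast_smul_eq_nsmul k, smul_smul, Nat.cast_add_choose]
  have : ((ij.1 + ij.2).factorial : k) ≠ 0 := Nat.cast_ne_zero.2 (Nat.factorial_ne_zero _)
  congr 1
  field_simp

namespace PowerSeries

variable {R A : Type*} [CommSemiring R] [Semiring A] [Module R A]

noncomputable def deformedMul (B : ℕ → A →ₗ[R] A →ₗ[R] A) (f g : A⟦X⟧) : A⟦X⟧ :=
  mk fun n ↦ ∑ p ∈ antidiagonal n, ∑ q ∈ antidiagonal p.2, B p.1 (coeff q.1 f) (coeff q.2 g)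

theorem coeff_deformedMul_deformedMul_left (B : ℕ → A →ₗ[R] A →ₗ[R] A) (f g h : A⟦X⟧)
    (n : ℕ) :
    coeff n (deformedMul B (deformedMul B f g) h) =
      ∑ p ∈ antidiagonal n, ∑ q ∈ antidiagonal p.2, ∑ r ∈ antidiagonal q.2,
        ∑ s ∈ antidiagonal p.1, B s.1 (B s.2 (coeff q.1 f) (coeff r.1 g)) (coeff r.2 h) := by
  simp only [deformedMul, coeff_mk, map_sum, LinearMap.sum_apply]
  simp only [sum_sigma']
  apply sum_nbij'
    (fun ⟨(m, _), (_, j), (l, _), (u, v)⟩ ↦ ⟨(m + l, u + v + j), (u, v + j), (v, j), (m, l)⟩)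
    (fun ⟨_, (u, _), (v, j), (m, l)⟩ ↦ ⟨(m, l + (u + v) + j), (l + (u + v), j), (l, u + v), (u, v)⟩)
    <;> aesop (add simp [add_assoc])

theorem coeff_deformedMul_deformedMul_right (B : ℕ → A →ₗ[R] A →ₗ[R] A) (f g h : A⟦X⟧)
    (n : ℕ) :
    coeff n (deformedMul B f (deformedMul B g h)) =
      ∑ p ∈ antidiagonal n, ∑ q ∈ antidiagonal p.2, ∑ r ∈ antidiagonal q.2,
        ∑ s ∈ antidiagonal p.1, B s.1 (coeff q.1 f) (B s.2 (coeff r.1 g) (coeff r.2 h)) := by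
  simp only [deformedMul, coeff_mk, map_sum]
  simp only [sum_sigma']
  apply sum_nbij'
    (fun ⟨(m, _), (u, _), (l, _), (v, j)⟩ ↦ ⟨(m + l, u + (v + j)), (u, v + j), (v, j), (m, l)⟩)
    (fun ⟨_, (u, _), (v, j), (m, l)⟩ ↦
      ⟨(m, u + (l + (v + j))), (u, l + (v + j)), (l, v + j), (v, j)⟩)
    <;> aesop (add simp [add_assoc, add_left_comm])

theorem deformedMul_assoc (B : ℕ → A →ₗ[R] A →ₗ[R] A)
    (hB : ∀ (N : ℕ) (a b c : A), ∑ p ∈ antidiagonal N, B p.1 (B p.2 a b) c =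
      ∑ p ∈ antidiagonal N, B p.1 a (B p.2 b c)) (f g h : A⟦X⟧) :
    deformedMul B (deformedMul B f g) h = deformedMul B f (deformedMul B g h) := by
  ext n
  simp only [coeff_deformedMul_deformedMul_left, coeff_deformedMul_deformedMul_right, hB]

end PowerSeries

section Moyal

variable {k A : Type*} [Field k] [Semiring A] [Algebra k A]

noncomputable def moyalTerm (φ ψ : Module.End k A) (m : ℕ) : A →ₗ[k] A →ₗ[k] A :=
  (m.factorial : k)⁻¹ • (LinearMap.mul k A).compl₁₂ (φ ^ m) (ψ ^ m)

theorem moyalTerm_apply (φ ψ : Module.End k A) (m : ℕ) (a b : A) :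
    moyalTerm φ ψ m a b = (m.factorial : k)⁻¹ • ((φ ^ m) a * (ψ ^ m) b) :=
  rfl

theorem sum_moyalTerm_assoc [CharZero k] (φ ψ : Module.End k A)
    (hφ : ∀ a b : A, φ (a * b) = φ a * b + a * φ b)
    (hψ : ∀ a b : A, ψ (a * b) = ψ a * b + a * ψ b) (hcomm : Commute φ ψ)
    (N : ℕ) (a b c : A) :
    ∑ p ∈ antidiagonal N, moyalTerm φ ψ p.1 (moyalTerm φ ψ p.2 a b) c =
      ∑ p ∈ antidiagonal N, moyalTerm φ ψ p.1 a (moyalTerm φ ψ p.2 b c) := by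
  set T : ℕ → ℕ → ℕ → A := fun x y z ↦
    ((x.factorial : k)⁻¹ * ((y.factorial : k)⁻¹ * (z.factorial : k)⁻¹)) •
      ((φ ^ (x + y)) a * (ψ ^ x) ((φ ^ z) b) * (ψ ^ (y + z)) c)
  have left : ∑ p ∈ antidiagonal N, moyalTerm φ ψ p.1 (moyalTerm φ ψ p.2 a b) c =
      ∑ p ∈ antidiagonal N, ∑ q ∈ antidiagonal p.2, T p.1 q.1 q.2 := by
    rw [← Nat.sum_antidiagonal_swap]
    refine sum_congr rfl fun ⟨l, m⟩ _ ↦ ?_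
    rw [Prod.fst_swap, Prod.snd_swap, moyalTerm_apply, moyalTerm_apply, map_smul, smul_mul_assoc,
      smul_comm, ← smul_mul_assoc, φ.inv_factorial_smul_pow_apply_mul_of_leibniz hφ, sum_mul,
      smul_sum]
    refine sum_congr rfl fun ⟨i, j⟩ hij ↦ ?_
    obtain rfl : i + j = m := HasAntidiagonal.mem_antidiagonal.1 hij
    simp only [T, smul_mul_assoc, smul_smul, ← Module.End.mul_apply, ← pow_add,
      (hcomm.pow_pow _ _).eq, add_comm i l]
  have right : ∑ p ∈ antidiagonal N, moyalTerm φ ψ p.1 a (moyalTerm φ ψ p.2 b c) =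
      ∑ p ∈ antidiagonal N, ∑ q ∈ antidiagonal p.1, T q.1 q.2 p.2 := by
    refine sum_congr rfl fun ⟨m, l⟩ _ ↦ ?_
    rw [moyalTerm_apply, moyalTerm_apply, map_smul, mul_smul_comm,
      smul_comm, ← mul_smul_comm, ψ.inv_factorial_smul_pow_apply_mul_of_leibniz hψ, mul_sum,
      smul_sum]
    refine sum_congr rfl fun ⟨i, j⟩ hij ↦ ?_
    obtain rfl : i + j = m := HasAntidiagonal.mem_antidiagonal.1 hij
    simp only [T, mul_smul_comm, smul_smul, ← Module.End.mul_apply, ← pow_add, mul_assoc]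
    congr 1
    ring
  rw [left, right, sum_antidiagonal_sum_antidiagonal_fst]

end Moyal

theorem moyalStar_eq_deformedMul {k A : Type*} [Field k] [CharZero k] [Ring A] [Algebra k A]
    (φ ψ : A →ₗ[k] A) : moyalStar φ ψ = PowerSeries.deformedMul (moyalTerm φ ψ) :=
  rfl

/-- If `φ` and `ψ` are commuting derivations of an associative algebra `A` over a field
of characteristic zero, then `a * b = m(exp(ℏ φ⊗ψ)(a⊗b))` defines an associative
multiplication on `A[[ℏ]]`. -/
theorem moyalStar_assoc (k A : Type*) [Field k] [CharZero k] [Ring A] [Algebra k A]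
    (φ ψ : A →ₗ[k] A)
    (hφ : ∀ a b : A, φ (a * b) = φ a * b + a * φ b)
    (hψ : ∀ a b : A, ψ (a * b) = ψ a * b + a * ψ b)
    (hcomm : φ.comp ψ = ψ.comp φ) :
    ∀ f g h : PowerSeries A,
      moyalStar φ ψ (moyalStar φ ψ f g) h = moyalStar φ ψ f (moyalStar φ ψ g h) := by
  rw [moyalStar_eq_deformedMul]
  exact PowerSeries.deformedMul_assoc _ (sum_moyalTerm_assoc φ ψ hφ hψ hcomm)
end

section
/- In the Weyl algebra W₁ = k⟨x,y⟩/(xy − yx − 1) over a field of characteristic zero, every derivation is inner. -/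
/-- The defining relation `x*y = q•(y*x) + ℏ` of the (generalized) q-Weyl algebra,
as a relation on the free algebra `k⟨x,y⟩` (with `x = ι 0`, `y = ι 1`). -/
inductive QWeylRel (k : Type*) [Field k] (q ℏ : k) :
    FreeAlgebra k (Fin 2) → FreeAlgebra k (Fin 2) → Prop
  | rel : QWeylRel k q ℏ (FreeAlgebra.ι k 0 * FreeAlgebra.ι k 1)
      (q • (FreeAlgebra.ι k 1 * FreeAlgebra.ι k 0) +
        algebraMap k (FreeAlgebra k (Fin 2)) ℏ)

/-- `QWeyl k q ℏ = k⟨x,y⟩/(xy − q·yx − ℏ)`. -/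
abbrev QWeyl (k : Type*) [Field k] (q ℏ : k) := RingQuot (QWeylRel k q ℏ)

/-- The generator `x`. -/
noncomputable abbrev QWeyl.x (k : Type*) [Field k] (q ℏ : k) : QWeyl k q ℏ :=
  RingQuot.mkAlgHom k (QWeylRel k q ℏ) (FreeAlgebra.ι k 0)

/-- The generator `y`. -/
noncomputable abbrev QWeyl.y (k : Type*) [Field k] (q ℏ : k) : QWeyl k q ℏ :=
  RingQuot.mkAlgHom k (QWeylRel k q ℏ) (FreeAlgebra.ι k 1)

/-!
The normal-ordered monomials `y ^ i * x ^ j` span `W₁` because `x * y = y * x + 1` lets every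
word be reordered, and they are linearly independent because `W₁` acts on `k[u, v]` by
`y ↦ u ·`, `x ↦ v · + ∂/∂u`, which sends `y ^ i * x ^ j` applied to `1` to `u ^ i * v ^ j`.
In this basis `w ↦ ⁅w, y⁆` differentiates in `x` and `w ↦ ⁅x, w⁆` differentiates in `y`. For a
derivation `D`, applying `D` to `⁅x, y⁆ = 1` says that the pair `(D x, D y)` is a closed 1-form,
and in characteristic zero it is exact: integrate `D y` in `x`, then the remainder, which commutes
with `y`, is a polynomial in `y` and can be integrated in `y`. The resulting `c` has
`⁅c, x⁆ = D x` and `⁅c, y⁆ = D y`, and derivations agreeing on generators are equal.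
-/

section

attribute [local instance] LieRing.ofAssociativeRing

namespace Ring

variable {A : Type*} [Ring A]

theorem lie_mul (a u v : A) : ⁅a, u * v⁆ = ⁅a, u⁆ * v + u * ⁅a, v⁆ := by
  simp only [Ring.lie_def]; noncomm_ring

theorem mul_lie (u v b : A) : ⁅u * v, b⁆ = u * ⁅v, b⁆ + ⁅u, b⁆ * v := by
  simp only [Ring.lie_def]; noncomm_ring

theorem lie_pow_succ_of_lie_eq_one {a b : A} (h : ⁅a, b⁆ = 1) (n : ℕ) :
    ⁅a, b ^ (n + 1)⁆ = (n + 1) • b ^ n := by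
  induction n with
  | zero => simp [h]
  | succ n ih =>
    rw [pow_succ, lie_mul, ih, h, smul_mul_assoc, ← pow_succ, mul_one, ← succ_nsmul]

theorem pow_succ_lie_of_lie_eq_one {a b : A} (h : ⁅a, b⁆ = 1) (n : ℕ) :
    ⁅a ^ (n + 1), b⁆ = (n + 1) • a ^ n := by
  induction n with
  | zero => simp [h]
  | succ n ih =>
    rw [pow_succ', mul_lie, ih, h, mul_smul_comm, ← pow_succ', one_mul, ← succ_nsmul]

end Ring

namespace LinearMap

variable {R A : Type*} [CommSemiring R] [Ring A] [Algebra R A]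

theorem map_one_eq_zero_of_leibniz (D : A →ₗ[R] A)
    (hD : ∀ u v, D (u * v) = D u * v + u * D v) : D 1 = 0 := by
  simpa using hD 1 1

theorem ext_of_leibniz_of_adjoin_eq_top {s : Set A} (hs : Algebra.adjoin R s = ⊤)
    {D₁ D₂ : A →ₗ[R] A} (h₁ : ∀ u v, D₁ (u * v) = D₁ u * v + u * D₁ v)
    (h₂ : ∀ u v, D₂ (u * v) = D₂ u * v + u * D₂ v) (h : ∀ a ∈ s, D₁ a = D₂ a) : D₁ = D₂ := by
  ext w
  have hw : w ∈ Algebra.adjoin R s := hs ▸ Algebra.mem_top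
  induction hw using Algebra.adjoin_induction with
  | mem a ha => exact h a ha
  | algebraMap r =>
    rw [Algebra.algebraMap_eq_smul_one, map_smul, map_smul, map_one_eq_zero_of_leibniz D₁ h₁,
      map_one_eq_zero_of_leibniz D₂ h₂]
  | add u v _ _ hu hv => rw [map_add, map_add, hu, hv]
  | mul u v _ _ hu hv => rw [h₁, h₂, hu, hv]

end LinearMap

namespace QWeyl

variable {k : Type*} [Field k]

theorem x_mul_y (q ℏ : k) :
    x k q ℏ * y k q ℏ = q • (y k q ℏ * x k q ℏ) + algebraMap k (QWeyl k q ℏ) ℏ := by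
  simpa using RingQuot.mkAlgHom_rel k (QWeylRel.rel (k := k) (q := q) (ℏ := ℏ))

theorem adjoin_x_y (q ℏ : k) : Algebra.adjoin k {x k q ℏ, y k q ℏ} = ⊤ := by
  have hxy : {x k q ℏ, y k q ℏ} =
      RingQuot.mkAlgHom k (QWeylRel k q ℏ) '' Set.range (FreeAlgebra.ι k) := by
    rw [← Set.range_comp]
    ext; simp [Fin.exists_fin_two, eq_comm]
  rw [hxy, ← AlgHom.map_adjoin, FreeAlgebra.adjoin_range_ι, Algebra.map_top, AlgHom.range_eq_top]
  exact RingQuot.mkAlgHom_surjective k _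

variable (k)

local notation "X" => x k 1 1
local notation "Y" => y k 1 1

theorem lie_x_y : ⁅X, Y⁆ = 1 := by
  rw [Ring.lie_def, x_mul_y, one_smul, map_one, add_sub_cancel_left]

theorem pow_succ_y_lie_x (i : ℕ) : ⁅Y ^ (i + 1), X⁆ = -(((i : k) + 1) • Y ^ i) := by
  rw [← lie_skew, Ring.lie_pow_succ_of_lie_eq_one (lie_x_y k), ← Nat.cast_smul_eq_nsmul k,
    Nat.cast_succ]

noncomputable def normalMonomial (p : ℕ × ℕ) : QWeyl k 1 1 := Y ^ p.1 * X ^ p.2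

theorem normalMonomial_zero_lie_y (i : ℕ) : ⁅normalMonomial k (i, 0), Y⁆ = 0 := by
  simpa [normalMonomial] using (Commute.pow_self Y i).lie_eq

theorem normalMonomial_succ_lie_y (i j : ℕ) :
    ⁅normalMonomial k (i, j + 1), Y⁆ = ((j : k) + 1) • normalMonomial k (i, j) := by
  rw [normalMonomial, Ring.mul_lie, Ring.pow_succ_lie_of_lie_eq_one (lie_x_y k),
    (Commute.pow_self Y i).lie_eq, zero_mul, add_zero, mul_smul_comm, normalMonomial,
    ← Nat.cast_smul_eq_nsmul k, Nat.cast_succ]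

theorem x_mul_normalMonomial_mem_span (p : ℕ × ℕ) :
    X * normalMonomial k p ∈ Submodule.span k (Set.range (normalMonomial k)) := by
  have hX : X * normalMonomial k p =
      normalMonomial k (p.1, p.2 + 1) + ⁅X, Y ^ p.1⁆ * X ^ p.2 := by
    simp only [normalMonomial, Ring.lie_def, pow_succ', sub_mul, mul_assoc]; abel
  rw [hX]
  refine Submodule.add_mem _ (Submodule.subset_span ⟨_, rfl⟩) ?_
  rcases p with ⟨_ | i, j⟩
  · simp [Ring.lie_def]
  · rw [Ring.lie_pow_succ_of_lie_eq_one (lie_x_y k), smul_mul_assoc]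
    exact Submodule.smul_of_tower_mem _ _ (Submodule.subset_span ⟨(i, j), rfl⟩)

theorem span_normalMonomial : Submodule.span k (Set.range (normalMonomial k)) = ⊤ := by
  set S := Submodule.span k (Set.range (normalMonomial k))
  have hgen : ∀ g ∈ ({X, Y} : Set (QWeyl k 1 1)), S ≤ S.comap (LinearMap.mulLeft k g) := by
    rintro g (rfl | rfl) <;> refine Submodule.span_le.2 ?_ <;> rintro _ ⟨p, rfl⟩
    · exact x_mul_normalMonomial_mem_span k p
    · exact Submodule.subset_span ⟨(p.1 + 1, p.2), by simp [normalMonomial, pow_succ', mul_assoc]⟩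
  have hmul : ∀ u : QWeyl k 1 1, ∀ s ∈ S, u * s ∈ S := by
    intro u
    have hu : u ∈ Algebra.adjoin k {X, Y} := adjoin_x_y (k := k) 1 1 ▸ Algebra.mem_top
    induction hu using Algebra.adjoin_induction with
    | mem g hg => exact fun s hs => hgen g hg hs
    | algebraMap r => exact fun s hs => by rw [← Algebra.smul_def]; exact S.smul_mem r hs
    | add u v _ _ hu hv => exact fun s hs => by rw [add_mul]; exact S.add_mem (hu s hs) (hv s hs)
    | mul u v _ _ hu hv => exact fun s hs => by rw [mul_assoc]; exact hu _ (hv s hs)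
  refine eq_top_iff.2 fun w _ => ?_
  simpa using hmul w 1 (Submodule.subset_span ⟨(0, 0), by simp [normalMonomial]⟩)

noncomputable def mvPolynomialRep : QWeyl k 1 1 →ₐ[k] Module.End k (MvPolynomial (Fin 2) k) :=
  RingQuot.liftAlgHom k ⟨FreeAlgebra.lift k
    ![LinearMap.mulLeft k (MvPolynomial.X 1) + (MvPolynomial.pderiv 0).toLinearMap,
      LinearMap.mulLeft k (MvPolynomial.X 0)], by
      rintro _ _ ⟨⟩
      refine LinearMap.ext fun f => ?_
      simp [Derivation.leibniz]
      ring⟩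

theorem mvPolynomialRep_x : mvPolynomialRep k X =
    LinearMap.mulLeft k (MvPolynomial.X 1) + (MvPolynomial.pderiv 0).toLinearMap := by
  simp [mvPolynomialRep]

theorem mvPolynomialRep_y : mvPolynomialRep k Y = LinearMap.mulLeft k (MvPolynomial.X 0) := by
  simp [mvPolynomialRep]

theorem mvPolynomialRep_normalMonomial_one (p : ℕ × ℕ) :
    mvPolynomialRep k (normalMonomial k p) 1 =
      MvPolynomial.X 0 ^ p.1 * MvPolynomial.X 1 ^ p.2 := by
  have hx : ∀ j : ℕ, (mvPolynomialRep k X ^ j) 1 = MvPolynomial.X 1 ^ j := by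
    intro j
    induction j with
    | zero => simp
    | succ j ih =>
      rw [pow_succ', Module.End.mul_apply, ih, mvPolynomialRep_x]
      simp [pow_succ']
  simp [normalMonomial, Module.End.mul_apply, hx, mvPolynomialRep_y, LinearMap.pow_mulLeft]

theorem linearIndependent_normalMonomial : LinearIndependent k (normalMonomial k) := by
  set e : ℕ × ℕ → Fin 2 →₀ ℕ := fun p => Finsupp.single 0 p.1 + Finsupp.single 1 p.2
  have he : Function.Injective e := by
    rintro ⟨i, j⟩ ⟨i', j'⟩ h
    have h0 := DFunLike.congr_fun h 0
    have h1 := DFunLike.congr_fun h 1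
    simp [e] at h0 h1
    simp [h0, h1]
  refine LinearIndependent.of_comp (LinearMap.applyₗ 1 ∘ₗ (mvPolynomialRep k).toLinearMap) ?_
  have hcomp : ⇑(LinearMap.applyₗ 1 ∘ₗ (mvPolynomialRep k).toLinearMap) ∘ normalMonomial k =
      MvPolynomial.basisMonomials (Fin 2) k ∘ e := by
    ext p : 1
    change mvPolynomialRep k (normalMonomial k p) 1 = MvPolynomial.monomial _ 1
    rw [MvPolynomial.monomial_single_add, ← MvPolynomial.X_pow_eq_monomial,
      mvPolynomialRep_normalMonomial_one]
  rw [hcomp]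
  exact (MvPolynomial.basisMonomials (Fin 2) k).linearIndependent.comp e he

noncomputable def normalBasis : Module.Basis (ℕ × ℕ) k (QWeyl k 1 1) :=
  .mk (linearIndependent_normalMonomial k) (span_normalMonomial k).ge

theorem normalBasis_apply (p : ℕ × ℕ) : normalBasis k p = normalMonomial k p :=
  Module.Basis.mk_apply ..

theorem normalBasis_repr_normalMonomial (p : ℕ × ℕ) :
    (normalBasis k).repr (normalMonomial k p) = Finsupp.single p 1 := by
  rw [← normalBasis_apply, Module.Basis.repr_self]

theorem normalBasis_repr_lie_y (w : QWeyl k 1 1) (i j : ℕ) :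
    (normalBasis k).repr ⁅w, Y⁆ (i, j) = (j + 1) * (normalBasis k).repr w (i, j + 1) := by
  have key : (normalBasis k).coord (i, j) ∘ₗ (LinearMap.mulRight k Y - LinearMap.mulLeft k Y) =
      ((j : k) + 1) • (normalBasis k).coord (i, j + 1) := by
    refine (normalBasis k).ext fun p => ?_
    simp only [LinearMap.comp_apply, LinearMap.smul_apply, LinearMap.sub_apply,
      LinearMap.mulRight_apply, LinearMap.mulLeft_apply, ← Ring.lie_def, Module.Basis.coord_apply,
      normalBasis_apply]
    rcases p with ⟨i', _ | j'⟩
    · simp [normalMonomial_zero_lie_y, normalBasis_repr_normalMonomial]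
    · simp only [normalMonomial_succ_lie_y, map_smul, normalBasis_repr_normalMonomial,
        Finsupp.smul_apply, Finsupp.single_apply, Prod.mk.injEq, Nat.add_right_cancel_iff,
        smul_eq_mul]
      split_ifs with h <;> simp [h]
  simpa [Ring.lie_def] using LinearMap.congr_fun key w

variable [CharZero k]

-- `rw [smul_lie]` needs `R` and `L` named to see the scalar action of `RingQuot`.
theorem exists_lie_y_eq (b : QWeyl k 1 1) : ∃ c : QWeyl k 1 1, ⁅c, Y⁆ = b := by
  have hb : b ∈ Submodule.span k (Set.range (normalMonomial k)) :=
    span_normalMonomial k ▸ Submodule.mem_top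
  induction hb using Submodule.span_induction with
  | mem _ h =>
    obtain ⟨⟨i, j⟩, rfl⟩ := h
    refine ⟨((j : k) + 1)⁻¹ • normalMonomial k (i, j + 1), ?_⟩
    rw [smul_lie (R := k) (L := QWeyl k 1 1), normalMonomial_succ_lie_y, smul_smul,
      inv_mul_cancel₀ (Nat.cast_add_one_ne_zero j), one_smul]
  | zero => exact ⟨0, zero_lie _⟩
  | add _ _ _ _ h₁ h₂ =>
    obtain ⟨c₁, h₁⟩ := h₁
    obtain ⟨c₂, h₂⟩ := h₂
    exact ⟨c₁ + c₂, by rw [add_lie, h₁, h₂]⟩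
  | smul r _ _ h =>
    obtain ⟨c, h⟩ := h
    exact ⟨r • c, by rw [smul_lie (R := k) (L := QWeyl k 1 1), h]⟩

theorem mem_span_pow_y_of_lie_y_eq_zero {w : QWeyl k 1 1} (hw : ⁅w, Y⁆ = 0) :
    w ∈ Submodule.span k (Set.range (Y ^ ·)) := by
  have hpow : Set.range (Y ^ ·) = normalBasis k '' {p | p.2 = 0} := by
    ext
    simp [normalBasis_apply, normalMonomial]
  rw [hpow, Module.Basis.mem_span_image]
  rintro ⟨i, _ | j⟩ hp
  · rfl
  · have h := normalBasis_repr_lie_y k w i j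
    rw [hw, map_zero, Finsupp.zero_apply, zero_eq_mul] at h
    exact absurd (h.resolve_left (Nat.cast_add_one_ne_zero j)) (Finsupp.mem_support_iff.1 hp)

theorem exists_lie_x_eq_of_mem_span_pow_y {a : QWeyl k 1 1}
    (ha : a ∈ Submodule.span k (Set.range (Y ^ ·))) :
    ∃ c : QWeyl k 1 1, ⁅c, X⁆ = a ∧ ⁅c, Y⁆ = 0 := by
  induction ha using Submodule.span_induction with
  | mem _ h =>
    obtain ⟨i, rfl⟩ := h
    refine ⟨-((i : k) + 1)⁻¹ • Y ^ (i + 1), ?_, ?_⟩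
    · rw [smul_lie (R := k) (L := QWeyl k 1 1), pow_succ_y_lie_x, smul_neg, neg_smul, neg_neg,
        smul_smul, inv_mul_cancel₀ (Nat.cast_add_one_ne_zero i), one_smul]
    · rw [smul_lie (R := k) (L := QWeyl k 1 1), (Commute.pow_self Y _).lie_eq, smul_zero]
  | zero => exact ⟨0, zero_lie _, zero_lie _⟩
  | add _ _ _ _ h₁ h₂ =>
    obtain ⟨c₁, h₁X, h₁Y⟩ := h₁
    obtain ⟨c₂, h₂X, h₂Y⟩ := h₂
    exact ⟨c₁ + c₂, by rw [add_lie, h₁X, h₂X], by rw [add_lie, h₁Y, h₂Y, add_zero]⟩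
  | smul r _ _ h =>
    obtain ⟨c, hX, hY⟩ := h
    refine ⟨r • c, ?_, ?_⟩
    · rw [smul_lie (R := k) (L := QWeyl k 1 1), hX]
    · rw [smul_lie (R := k) (L := QWeyl k 1 1), hY, smul_zero]

theorem exists_lie_x_eq_and_lie_y_eq {a b : QWeyl k 1 1} (h : ⁅a, Y⁆ = ⁅b, X⁆) :
    ∃ c : QWeyl k 1 1, ⁅c, X⁆ = a ∧ ⁅c, Y⁆ = b := by
  obtain ⟨c₁, hc₁⟩ := exists_lie_y_eq k b
  have hclosed : ⁅a - ⁅c₁, X⁆, Y⁆ = 0 := by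
    rw [sub_lie, lie_lie, lie_x_y, hc₁, h, ← lie_skew b X]
    simp [Ring.lie_def]
  obtain ⟨c₂, hc₂X, hc₂Y⟩ :=
    exists_lie_x_eq_of_mem_span_pow_y k (mem_span_pow_y_of_lie_y_eq_zero k hclosed)
  exact ⟨c₁ + c₂, by rw [add_lie, hc₂X, add_sub_cancel], by rw [add_lie, hc₁, hc₂Y, add_zero]⟩

end QWeyl

end

/-- Every derivation of the first Weyl algebra `W₁ = k⟨x,y⟩/(xy − yx − 1)` over a
field of characteristic zero is inner: `H¹(W₁, W₁) = 0`. -/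
theorem weyl_derivation_inner (k : Type*) [Field k] [CharZero k]
    (D : QWeyl k 1 1 →ₗ[k] QWeyl k 1 1)
    (hD : ∀ u v : QWeyl k 1 1, D (u * v) = D u * v + u * D v) :
    ∃ c : QWeyl k 1 1, ∀ w : QWeyl k 1 1, D w = c * w - w * c := by
  set X := QWeyl.x k 1 1
  set Y := QWeyl.y k 1 1
  have hclosed : ⁅D X, Y⁆ = ⁅D Y, X⁆ := by
    have h := congrArg D (QWeyl.lie_x_y k)
    rw [Ring.lie_def, map_sub, hD, hD, LinearMap.map_one_eq_zero_of_leibniz D hD] at h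
    rw [Ring.lie_def, Ring.lie_def, ← sub_eq_zero, ← h]
    abel
  obtain ⟨c, hcX, hcY⟩ := QWeyl.exists_lie_x_eq_and_lie_y_eq k hclosed
  have hD_eq : D = LinearMap.mulLeft k c - LinearMap.mulRight k c := by
    refine LinearMap.ext_of_leibniz_of_adjoin_eq_top (QWeyl.adjoin_x_y 1 1) hD
      (fun u v => Ring.lie_mul c u v) ?_
    rintro _ (rfl | rfl)
    · exact hcX.symm
    · exact hcY.symm
  exact ⟨c, fun w => LinearMap.congr_fun hD_eq w⟩
end
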